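/- For positive integers r and s and any partition λ, the s-core of λ equals the s-core of the rs-core of λ. In particular, every s-core is also an rs-core. -/

import Mathlib

open Classical

/-- A partition: an infinite weakly decreasing sequence of non-negative integers
with finite sum.  Here `f n` denotes the part `λ_{n+1}`. -/
structure BetaPartition where
  f : ℕ → ℕ
  antitone : ∀ ⦃m n : ℕ⦄, m ≤ n → f n ≤ f m
  eventually_zero : ∃ N, ∀ n, N ≤ n → f n = 0

instance : Inhabited BetaPartition :=
  ⟨⟨fun _ => 0, fun _ _ _ => le_rfl, ⟨0, fun _ _ => rfl⟩⟩⟩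

namespace BetaPartition

/-- The beta-set `β_r(λ) = {λ_i - i + r : i ≥ 1}`. -/
def beta (r : ℤ) (l : BetaPartition) : Set ℤ :=
  {x | ∃ n : ℕ, x = (l.f n : ℤ) - (n + 1) + r}

/-- The size `|λ|` of a partition. -/
noncomputable def size (l : BetaPartition) : ℕ := ∑ᶠ n, l.f n

/-- The partition whose beta-set (for some shift `r`) is `B`, if it exists. -/
noncomputable def ofBeta (B : Set ℤ) : BetaPartition :=
  if h : ∃ l : BetaPartition, ∃ r : ℤ, beta r l = B then h.choose else default

/-- The beta-set of the `s`-core: beads pushed up their runners as far as possible.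
A position `x` is occupied iff the number of beads of `B` weakly above it on its runner
exceeds the number of gaps strictly below it on its runner. -/
def coreBeta (s : ℕ) (B : Set ℤ) : Set ℤ :=
  {x | ({y : ℤ | y ∉ B ∧ y ≡ x [ZMOD (s : ℤ)] ∧ y < x}).ncard
      < ({b : ℤ | b ∈ B ∧ b ≡ x [ZMOD (s : ℤ)] ∧ x ≤ b}).ncard}

/-- The `s`-core of a partition. -/
noncomputable def core (s : ℕ) (l : BetaPartition) : BetaPartition :=
  ofBeta (coreBeta s (beta 0 l))

/-- `λ` is an `s`-core. -/
def IsCore (s : ℕ) (l : BetaPartition) : Prop := core s l = l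

/-- The `s`-weight of `λ`. -/
noncomputable def wt (s : ℕ) (l : BetaPartition) : ℕ := (size l - size (core s l)) / s

/-- The component of the `s`-quotient of `λ` indexed by `j : ZMod s`. -/
noncomputable def quot (s : ℕ) (l : BetaPartition) (j : ZMod s) : BetaPartition :=
  ofBeta {z : ℤ | ((j.val : ℤ) + (s : ℤ) * z) ∈ beta 0 l}

/-- The `s`-set entry `Γ_j(λ)`: the smallest integer in the class `j` mod `s`
not lying in the beta-set of the `s`-core of `λ`. -/
noncomputable def sSet (s : ℕ) (l : BetaPartition) (j : ZMod s) : ℤ :=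
  sInf {x : ℤ | (x : ZMod s) = j ∧ x ∉ beta 0 (core s l)}

/-- `λ` is an `[s:t]`-core. -/
def IsGenCore (s t : ℕ) (l : BetaPartition) : Prop :=
  wt s (core t l) = wt s l

/-- The level `t` action of the generator `w_i` of the affine symmetric group `W_s` on `ℤ`. -/
def genActZ (s t : ℕ) (i : ZMod s) (n : ℤ) : ℤ :=
  if (n : ZMod s) = (i - 1) * (t : ZMod s) - ((((s : ℤ) - 1) * ((t : ℤ) - 1) / 2 : ℤ) : ZMod s)
    then n + t
  else if (n : ZMod s) = i * (t : ZMod s) - ((((s : ℤ) - 1) * ((t : ℤ) - 1) / 2 : ℤ) : ZMod s)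
    then n - t
  else n

/-- The level `t` action of the generator `w_i` of `W_s` on partitions, via beta-sets. -/
noncomputable def genAct (s t : ℕ) (i : ZMod s) (l : BetaPartition) : BetaPartition :=
  ofBeta (genActZ s t i '' beta 0 l)

/-- The action of a word in the generators of `W_s`, at level `t`, on partitions. -/
noncomputable def wordAct (s t : ℕ) (w : List (ZMod s)) (l : BetaPartition) : BetaPartition :=
  w.foldr (genAct s t) l

/-- `λ` and `μ` lie in the same orbit for the level `t` action of `W_s`. -/
def SameOrbit (s t : ℕ) (l m : BetaPartition) : Prop :=
  ∃ w : List (ZMod s), wordAct s t w l = m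

/-- `λ` and `μ` lie in the same orbit for the commuting actions of `W_s` (level `t`)
and `W_t` (level `s`). -/
def SameOrbit2 (s t : ℕ) (l m : BetaPartition) : Prop :=
  ∃ a : List (ZMod s), ∃ b : List (ZMod t), wordAct s t a (wordAct t s b l) = m

/-- The `t`-weighted `s`-quotient of `λ`: the multiset of pairs
`(Γ_i(λ) + tℤ, λ^(i))` over `i ∈ ℤ/sℤ`. -/
noncomputable def twq (s t : ℕ) (l : BetaPartition) : Multiset (ZMod t × BetaPartition) :=
  ((List.range s).map (fun i =>
    (((sSet s l (i : ZMod s) : ℤ) : ZMod t), quot s l (i : ZMod s))) : Multiset _)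

/-- The largest `(s,t)`-core `κ_{s,t}`: the partition whose beta-set is the set of
integers not expressible as a non-negative integer combination of `s` and `t`. -/
noncomputable def kappa (s t : ℕ) : BetaPartition :=
  ofBeta {x : ℤ | ¬ ∃ a b : ℕ, x = (a : ℤ) * s + (b : ℤ) * t}

end BetaPartition

/-!
Read the beta-set of `λ` on an abacus with `t` runners, the residue classes mod `t`. For a
runner and a position `x`, the charge is the number of beads of the runner at or after `x` minus
the number of its gaps before `x`. The beta-set of the `t`-core consists of the positions whose
charge on their own runner is positive, and one computes that the `t`-core has the same
`t`-charges as `λ`. A runner mod `s` is the disjoint union of `r` runners mod `rs`, so every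
`s`-charge is a sum of `rs`-charges; these do not change when `λ` is replaced by its `rs`-core,
hence neither do the `s`-charges nor the `s`-core. Since `ofBeta` only recovers a beta-set up to
translation, one also needs that cores commute with translating the beta-set.

For the second part: the beta-set of an `s`-core is closed under moving a bead `s` places up
its runner, hence under moving it `rs` places, and such a set is its own `rs`-core.
-/

namespace BetaPartition

def IsBetaSet (B : Set ℤ) : Prop :=
  BddAbove B ∧ ∃ m, Set.Iic m ⊆ B

lemma beta_eq_range (r : ℤ) (l : BetaPartition) :
    beta r l = Set.range fun n : ℕ => (l.f n : ℤ) - (n + 1) + r := by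
  ext x
  exact exists_congr fun _ => eq_comm

lemma strictAnti_beta_seq (r : ℤ) (l : BetaPartition) :
    StrictAnti fun n : ℕ => (l.f n : ℤ) - (n + 1) + r := by
  intro m n hmn
  have := l.antitone hmn.le
  dsimp only
  omega

lemma isBetaSet_beta (r : ℤ) (l : BetaPartition) : IsBetaSet (beta r l) := by
  obtain ⟨N, hN⟩ := l.eventually_zero
  refine ⟨⟨l.f 0 + r, ?_⟩, r - N - 1,
    fun x (hx : x ≤ r - N - 1) => ⟨(r - x - 1).toNat, ?_⟩⟩
  · rintro _ ⟨n, rfl⟩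
    have := l.antitone n.zero_le
    omega
  · have := hN (r - x - 1).toNat (by omega)
    omega

lemma beta_add (r c : ℤ) (l : BetaPartition) :
    beta (r + c) l = (· + c) '' beta r l := by
  rw [beta_eq_range, beta_eq_range, ← Set.range_comp]
  congr 1
  ext n
  simp only [Function.comp_apply]
  ring

lemma eq_of_beta_eq {l l' : BetaPartition} {r r' : ℤ} (h : beta r l = beta r' l') : l = l' := by
  rw [beta_eq_range, beta_eq_range] at h
  have hseq := (StrictMono.range_inj (γ := ℤᵒᵈ) (strictAnti_beta_seq r l)
    (strictAnti_beta_seq r' l')).1 h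
  obtain ⟨N, hN⟩ := l.eventually_zero
  obtain ⟨N', hN'⟩ := l'.eventually_zero
  have hr : r = r' := by
    have := congrFun hseq (max N N')
    simp only [hN _ (le_max_left N N'), hN' _ (le_max_right N N')] at this
    omega
  cases l
  cases l'
  congr
  funext n
  have := congrFun hseq n
  simp only at this
  omega

lemma exists_strictAnti_range_eq {B : Set ℤ} (hB : IsBetaSet B) :
    ∃ e : ℕ → ℤ, StrictAnti e ∧ Set.range e = B := by
  obtain ⟨⟨M, hM⟩, m, hm⟩ := hB
  set p : ℕ → Prop := fun k => M - k ∈ B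
  have hp : (Set.ofPred p).Infinite := by
    refine Set.infinite_of_forall_exists_gt fun k => ⟨k + (M - m).toNat + 1, ?_, by omega⟩
    exact hm (by simp only [Set.mem_Iic]; omega)
  refine ⟨fun n => M - Nat.nth p n, fun a b hab => ?_, ?_⟩
  · have := Nat.nth_strictMono hp hab
    dsimp only
    omega
  · ext x
    constructor
    · rintro ⟨n, rfl⟩
      exact Nat.nth_mem_of_infinite hp n
    · intro hx
      have hxM := hM hx
      obtain ⟨n, hn⟩ : (M - x).toNat ∈ Set.range (Nat.nth p) := by
        rw [Nat.range_nth_of_infinite hp]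
        change M - ((M - x).toNat : ℤ) ∈ B
        rwa [Int.toNat_of_nonneg (by omega), sub_sub_cancel]
      exact ⟨n, by dsimp only; omega⟩

lemma exists_beta_eq {B : Set ℤ} (hB : IsBetaSet B) :
    ∃ l : BetaPartition, ∃ r : ℤ, beta r l = B := by
  obtain ⟨e, he, rfl⟩ := exists_strictAnti_range_eq hB
  obtain ⟨m, hm⟩ := hB.2
  have hg : Antitone fun n => e n + n := antitone_nat_of_succ_le fun n => by
    have := he (Nat.lt_add_one n)
    push_cast
    omega
  set N := (e 0 - m).toNat
  have heN : e N ≤ m := by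
    have := hg N.zero_le
    dsimp only at this
    omega
  -- below `m` the beta-set has no holes, so `e` eventually decreases in steps of one
  have hstep : ∀ n, N ≤ n → e (n + 1) = e n - 1 := fun n hn => by
    obtain ⟨j, hj⟩ := hm (show e n - 1 ≤ m by linarith [he.antitone hn])
    have hnj : n < j := he.lt_iff_gt.1 (by omega)
    linarith [he.antitone (Nat.succ_le_of_lt hnj), he (Nat.lt_add_one n)]
  set K := e N + N
  have hconst : ∀ n, N ≤ n → e n + n = K := fun n hn => by
    induction n, hn using Nat.le_induction with
    | base => rfl
    | succ n hn ih => push_cast; rw [hstep n hn]; omega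
  have hK : ∀ n, K ≤ e n + n := fun n =>
    (hconst _ (le_max_right n N)).symm.le.trans (hg (le_max_left n N))
  refine ⟨⟨fun n => (e n + n - K).toNat,
    fun a b hab => by have := hg hab; dsimp only at this ⊢; omega,
    N, fun n hn => by have := hconst n hn; omega⟩, K + 1, ?_⟩
  rw [beta_eq_range]
  congr 1
  funext n
  have := hK n
  dsimp only
  omega

lemma beta_ofBeta {B : Set ℤ} (hB : IsBetaSet B) : ∃ r, beta r (ofBeta B) = B := by
  have h := exists_beta_eq hB
  rw [ofBeta, dif_pos h]
  exact h.choose_spec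

lemma ofBeta_beta (r : ℤ) (l : BetaPartition) : ofBeta (beta r l) = l :=
  eq_of_beta_eq (beta_ofBeta (isBetaSet_beta r l)).choose_spec

lemma ofBeta_image_add {B : Set ℤ} (hB : IsBetaSet B) (c : ℤ) :
    ofBeta ((· + c) '' B) = ofBeta B := by
  obtain ⟨r, hr⟩ := beta_ofBeta hB
  rw [← hr, ← beta_add, ofBeta_beta, ofBeta_beta]

section Abacus

variable {B : Set ℤ} {t : ℕ}

def runner (t : ℕ) (a : ℤ) : Set ℤ := {y | y ≡ a [ZMOD t]}

def beads (B : Set ℤ) (t : ℕ) (a x : ℤ) : Set ℤ := B ∩ (runner t a ∩ Set.Ici x)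

def gaps (B : Set ℤ) (t : ℕ) (a x : ℤ) : Set ℤ := Bᶜ ∩ (runner t a ∩ Set.Iio x)

noncomputable def charge (B : Set ℤ) (t : ℕ) (a x : ℤ) : ℤ :=
  (beads B t a x).ncard - (gaps B t a x).ncard

lemma mem_coreBeta {x : ℤ} : x ∈ coreBeta t B ↔ 0 < charge B t x x := by
  change (gaps B t x x).ncard < (beads B t x x).ncard ↔ _
  rw [charge]
  omega

lemma runner_eq_of_modEq {a a' : ℤ} (h : a ≡ a' [ZMOD t]) : runner t a = runner t a' :=
  Set.ext fun _ => ⟨fun hy => hy.trans h, fun hy => hy.trans h.symm⟩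

lemma charge_congr {a a' : ℤ} (h : a ≡ a' [ZMOD t]) (x : ℤ) :
    charge B t a x = charge B t a' x := by
  simp only [charge, beads, gaps, runner_eq_of_modEq h]

lemma finite_inter_Ici (hB : BddAbove B) (x : ℤ) : (B ∩ Set.Ici x).Finite := by
  obtain ⟨M, hM⟩ := hB
  exact (Set.finite_Icc x M).subset fun b ⟨hb, hxb⟩ => ⟨hxb, hM hb⟩

lemma finite_compl_inter_Iio {m : ℤ} (hB : Set.Iic m ⊆ B) (x : ℤ) :
    (Bᶜ ∩ Set.Iio x).Finite :=
  (Set.finite_Ioo m x).subset fun _ ⟨hy, hyx⟩ => ⟨lt_of_not_ge fun h => hy (hB h), hyx⟩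

lemma finite_beads (hB : BddAbove B) (t : ℕ) (a x : ℤ) : (beads B t a x).Finite :=
  (finite_inter_Ici hB x).subset (Set.inter_subset_inter_right B Set.inter_subset_right)

lemma finite_gaps {m : ℤ} (hB : Set.Iic m ⊆ B) (t : ℕ) (a x : ℤ) : (gaps B t a x).Finite :=
  (finite_compl_inter_Iio hB x).subset (Set.inter_subset_inter_right Bᶜ Set.inter_subset_right)

lemma charge_eq_charge_add_ncard (hB : IsBetaSet B) (t : ℕ) (a : ℤ) {x q : ℤ}
    (hxq : x ≤ q) :
    charge B t a x = charge B t a q + (runner t a ∩ Set.Ico x q).ncard := by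
  obtain ⟨m, hm⟩ := hB.2
  set W := runner t a ∩ Set.Ico x q
  have hW : W.Finite := (Set.finite_Ico x q).subset Set.inter_subset_right
  have hbeads : beads B t a x = B ∩ W ∪ beads B t a q := by
    rw [beads, beads, ← Set.inter_union_distrib_left, ← Set.inter_union_distrib_left,
      Set.Ico_union_Ici_eq_Ici hxq]
  have hgaps : gaps B t a q = gaps B t a x ∪ Bᶜ ∩ W := by
    rw [gaps, gaps, ← Set.inter_union_distrib_left, ← Set.inter_union_distrib_left,
      Set.Iio_union_Ico_eq_Iio hxq]
  have hdisj₁ : Disjoint (B ∩ W) (beads B t a q) :=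
    Set.disjoint_left.2 fun _ ⟨_, _, hy⟩ ⟨_, _, hy'⟩ => not_le.2 hy.2 hy'
  have hdisj₂ : Disjoint (gaps B t a x) (Bᶜ ∩ W) :=
    Set.disjoint_left.2 fun _ ⟨_, _, hy⟩ ⟨_, _, hy'⟩ => not_le.2 hy hy'.1
  have hW_split := Set.ncard_inter_add_ncard_sdiff_eq_ncard W B hW
  rw [Set.inter_comm, Set.sdiff_eq, Set.inter_comm W] at hW_split
  rw [charge, charge, hbeads, hgaps,
    Set.ncard_union_eq hdisj₁ (hW.subset Set.inter_subset_right) (finite_beads hB.1 t a q),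
    Set.ncard_union_eq hdisj₂ (finite_gaps hm t a x) (hW.subset Set.inter_subset_right),
    ← hW_split]
  push_cast
  ring

lemma ncard_runner_inter_Ico_sub_mul (ht : 0 < t) (a q : ℤ) (k : ℕ) :
    (runner t a ∩ Set.Ico (q - t * k) q).ncard = k := by
  have h := Int.Ico_filter_modEq_card (q - t * k) q (r := t) (by exact_mod_cast ht) a
  have hset : runner t a ∩ Set.Ico (q - t * k) q =
      ↑({x ∈ Finset.Ico (q - t * k) q | x ≡ a [ZMOD t]}) := by
    ext
    simp [runner, and_comm]
  rw [hset, Set.ncard_coe_finset]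
  have : (((q - t * k : ℤ) : ℚ) - a) / ((t : ℤ) : ℚ) =
      ((q : ℚ) - a) / ((t : ℤ) : ℚ) - k := by
    push_cast
    field_simp
    ring
  rw [this, Int.ceil_sub_natCast] at h
  omega

lemma charge_sub_mul (hB : IsBetaSet B) (ht : 0 < t) (a q : ℤ) (k : ℕ) :
    charge B t a (q - t * k) = charge B t a q + k := by
  rw [charge_eq_charge_add_ncard hB t a (sub_le_self q (by positivity)),
    ncard_runner_inter_Ico_sub_mul ht]

lemma charge_of_subset_Iio {q : ℤ} (h : B ⊆ Set.Iio q) (t : ℕ) (a : ℤ) :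
    charge B t a q = -(gaps B t a q).ncard := by
  have : beads B t a q = ∅ :=
    Set.eq_empty_iff_forall_notMem.2 fun _ ⟨hy, _, hqy⟩ => (Set.mem_Iio.1 (h hy)).not_ge hqy
  rw [charge, this, Set.ncard_empty]
  simp

lemma exists_le_of_mem_coreBeta {x : ℤ} (hx : x ∈ coreBeta t B) : ∃ b ∈ B, x ≤ b := by
  rw [mem_coreBeta, charge] at hx
  obtain ⟨b, hb, _, hxb⟩ := Set.nonempty_of_ncard_ne_zero (s := beads B t x x) (by omega)
  exact ⟨b, hb, hxb⟩

lemma isBetaSet_coreBeta (hB : IsBetaSet B) (t : ℕ) : IsBetaSet (coreBeta t B) := by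
  obtain ⟨⟨M, hM⟩, m, hm⟩ := hB
  refine ⟨⟨M, fun x hx => ?_⟩, m, fun x (hx : x ≤ m) => ?_⟩
  · obtain ⟨b, hb, hxb⟩ := exists_le_of_mem_coreBeta hx
    exact hxb.trans (hM hb)
  · have hgaps : gaps B t x x = ∅ :=
      Set.eq_empty_iff_forall_notMem.2 fun y ⟨hy, _, hyx⟩ =>
        hy (hm (show y ≤ m from (le_of_lt hyx).trans hx))
    have hbeads : (beads B t x x).Nonempty := ⟨x, hm hx, Int.ModEq.refl x, le_refl x⟩
    have := (Set.ncard_pos (finite_beads ⟨M, hM⟩ t x x)).2 hbeads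
    rw [mem_coreBeta, charge, hgaps, Set.ncard_empty]
    omega

lemma runner_inter_Iio_eq_range (ht : 0 < t) (q : ℤ) :
    runner t q ∩ Set.Iio q = Set.range fun k : ℕ => q - t * (k + 1 : ℕ) := by
  ext y
  constructor
  · rintro ⟨hy, hyq : y < q⟩
    obtain ⟨d, hd⟩ := hy.dvd
    have hd1 : 0 < d := pos_of_mul_pos_right (hd ▸ sub_pos.2 hyq) (by positivity)
    exact ⟨(d - 1).toNat, by push_cast; rw [Int.toNat_of_nonneg (by omega)]; linarith⟩
  · rintro ⟨k, rfl⟩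
    exact ⟨Int.modEq_iff_dvd.2 ⟨k + 1, by push_cast; ring⟩,
      sub_lt_self q (by positivity)⟩

lemma charge_coreBeta (hB : IsBetaSet B) (ht : 0 < t) (a x : ℤ) :
    charge (coreBeta t B) t a x = charge B t a x := by
  obtain ⟨M, hM⟩ := hB.1
  set C := coreBeta t B
  set N := (max (M + 1 - a) (x - a)).toNat
  set q := a + t * N
  have hNq : (N : ℤ) ≤ t * N := le_mul_of_one_le_left (by positivity) (by exact_mod_cast ht)
  have hxq : x ≤ q := by omega
  have hqa : a ≡ q [ZMOD t] := Int.modEq_iff_dvd.2 ⟨N, by ring⟩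
  have hBq : B ⊆ Set.Iio q := fun b hb => show b < q by have := hM hb; omega
  have hCq : C ⊆ Set.Iio q := fun y hy => by
    obtain ⟨b, hb, hyb⟩ := exists_le_of_mem_coreBeta hy
    exact lt_of_le_of_lt hyb (hBq hb)
  set G := (gaps B t a q).ncard
  have hmem : ∀ k : ℕ, q - t * (k + 1 : ℕ) ∈ C ↔ G ≤ k := fun k => by
    have hka : q - t * (k + 1 : ℕ) ≡ a [ZMOD t] :=
      (Int.modEq_iff_dvd.2 ⟨k + 1, by push_cast; ring⟩).trans hqa.symm
    rw [mem_coreBeta, charge_congr hka, charge_sub_mul hB ht, charge_of_subset_Iio hBq]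
    push_cast
    omega
  have hgapsC : gaps C t a q = (fun k : ℕ => q - t * (k + 1 : ℕ)) '' Set.Iio G := by
    rw [gaps, runner_eq_of_modEq hqa, runner_inter_Iio_eq_range ht,
      ← Set.image_preimage_eq_inter_range]
    congr 1
    ext k
    simp only [Set.mem_preimage, Set.mem_compl_iff, hmem, Set.mem_Iio, not_le]
  have hinj : Function.Injective fun k : ℕ => q - t * (k + 1 : ℕ) := fun i j h => by
    simpa [ht.ne'] using h
  rw [charge_eq_charge_add_ncard (isBetaSet_coreBeta hB t) t a hxq,
    charge_eq_charge_add_ncard hB t a hxq, charge_of_subset_Iio hCq, charge_of_subset_Iio hBq,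
    hgapsC, Set.ncard_image_of_injective _ hinj, Set.ncard_Iio_nat]

lemma runner_eq_biUnion {r : ℕ} (hr : 0 < r) (s : ℕ) (a : ℤ) :
    runner s a = ⋃ k ∈ Finset.range r, runner (r * s) (a + k * s) := by
  ext y
  simp only [Set.mem_iUnion, Finset.mem_range, exists_prop]
  constructor
  · intro hy
    obtain ⟨d, hd⟩ := hy.symm.dvd
    have hr' : (0 : ℤ) < r := by exact_mod_cast hr
    have hmod := Int.mul_ediv_add_emod d r
    have hlt := Int.emod_lt_of_pos d hr'
    refine ⟨(d % r).toNat, by omega, Int.ModEq.symm <| Int.modEq_iff_dvd.2 ⟨d / r, ?_⟩⟩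
    rw [Int.toNat_of_nonneg (Int.emod_nonneg d hr'.ne')]
    push_cast
    linear_combination hd - (s : ℤ) * hmod
  · rintro ⟨k, -, hk : y ≡ _ [ZMOD ((r * s : ℕ) : ℤ)]⟩
    rw [Nat.cast_mul] at hk
    exact (hk.of_mul_left r).trans (Int.modEq_iff_dvd.2 ⟨-k, by ring⟩)

lemma pairwiseDisjoint_runner {r s : ℕ} (hs : 0 < s) (a : ℤ) :
    (↑(Finset.range r) : Set ℕ).PairwiseDisjoint fun k => runner (r * s) (a + k * s) := by
  intro i hi j hj hij
  refine Set.disjoint_left.2 fun y (hyi : y ≡ _ [ZMOD ((r * s : ℕ) : ℤ)])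
    (hyj : y ≡ _ [ZMOD ((r * s : ℕ) : ℤ)]) => hij ?_
  rw [Nat.cast_mul] at hyi hyj
  have := (Int.ModEq.add_left_cancel' a (hyi.symm.trans hyj)).mul_right_cancel'
    (c := (s : ℤ)) (by exact_mod_cast hs.ne')
  exact (Int.natCast_modEq_iff.1 this).eq_of_lt_of_lt (Finset.mem_range.1 hi)
    (Finset.mem_range.1 hj)

lemma ncard_inter_runner_eq_sum {r s : ℕ} (hr : 0 < r) (hs : 0 < s) (a : ℤ) {P Q : Set ℤ}
    (hPQ : (P ∩ Q).Finite) :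
    (P ∩ (runner s a ∩ Q)).ncard =
      ∑ k ∈ Finset.range r, (P ∩ (runner (r * s) (a + k * s) ∩ Q)).ncard := by
  rw [runner_eq_biUnion hr s a, Set.iUnion₂_inter, Set.inter_iUnion₂,
    ← Finset.set_biUnion_coe, Set.Finite.ncard_biUnion (Finset.finite_toSet _),
    finsum_mem_coe_finset]
  · exact fun k _ => hPQ.subset fun y ⟨hP, _, hQ⟩ => ⟨hP, hQ⟩
  · exact (pairwiseDisjoint_runner hs a).mono fun _ =>
      Set.inter_subset_right.trans Set.inter_subset_left

lemma charge_eq_sum (hB : IsBetaSet B) {r s : ℕ} (hr : 0 < r) (hs : 0 < s) (a x : ℤ) :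
    charge B s a x = ∑ k ∈ Finset.range r, charge B (r * s) (a + k * s) x := by
  obtain ⟨m, hm⟩ := hB.2
  simp only [charge, beads, gaps, ncard_inter_runner_eq_sum hr hs a (finite_inter_Ici hB.1 x),
    ncard_inter_runner_eq_sum hr hs a (finite_compl_inter_Iio hm x), Finset.sum_sub_distrib]
  push_cast
  rfl

end Abacus

section Closure

variable {B : Set ℤ} {t : ℕ}

def DownClosedMod (t : ℕ) (B : Set ℤ) : Prop :=
  ∀ ⦃x⦄, x ∈ B → ∀ ⦃y⦄, y ≤ x → y ≡ x [ZMOD t] → y ∈ B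

lemma DownClosedMod.mul_left {s : ℕ} (h : DownClosedMod s B) (r : ℕ) :
    DownClosedMod (r * s) B := fun _ hx _ hyx hmod =>
  h hx hyx (by rw [Nat.cast_mul] at hmod; exact hmod.of_mul_left r)

lemma DownClosedMod.image_add (h : DownClosedMod t B) (c : ℤ) :
    DownClosedMod t ((· + c) '' B) := by
  rintro _ ⟨x, hx, rfl⟩ y (hyx : y ≤ x + c) hmod
  exact ⟨y - c, h hx (by linarith) (by simpa using hmod.sub_right c), by ring⟩

lemma downClosedMod_coreBeta (hB : IsBetaSet B) (t : ℕ) : DownClosedMod t (coreBeta t B) := by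
  intro x hx y hyx hmod
  rw [mem_coreBeta] at hx ⊢
  rw [charge_congr hmod, charge_eq_charge_add_ncard hB t x hyx]
  positivity

lemma coreBeta_eq_self (hB : BddAbove B) (h : DownClosedMod t B) : coreBeta t B = B := by
  ext x
  rw [mem_coreBeta, charge]
  by_cases hx : x ∈ B
  · have hgaps : gaps B t x x = ∅ :=
      Set.eq_empty_iff_forall_notMem.2 fun y ⟨hy, hmod, hyx⟩ => hy (h hx (le_of_lt hyx) hmod)
    have := (Set.ncard_pos (finite_beads hB t x x)).2 ⟨x, hx, Int.ModEq.refl x, le_refl x⟩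
    rw [hgaps, Set.ncard_empty]
    simpa [hx]
  · have hbeads : beads B t x x = ∅ :=
      Set.eq_empty_iff_forall_notMem.2 fun b ⟨hb, hmod, hxb⟩ => hx (h hb hxb hmod.symm)
    rw [hbeads, Set.ncard_empty]
    simp [hx]

lemma coreBeta_zero (hB : BddAbove B) : coreBeta 0 B = B :=
  coreBeta_eq_self hB fun x hx y _ hmod => by
    rwa [show y = x by simpa [Int.ModEq] using hmod]

end Closure

lemma image_add_runner (t : ℕ) (a c : ℤ) : (· + c) '' runner t a = runner t (a + c) := by
  ext y
  refine ⟨?_, fun (hy : y ≡ a + c [ZMOD t]) =>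
    ⟨y - c, show y - c ≡ a [ZMOD t] by simpa using hy.sub_right c, by ring⟩⟩
  rintro ⟨z, hz : z ≡ a [ZMOD t], rfl⟩
  exact hz.add_right c

lemma charge_image_add (B : Set ℤ) (t : ℕ) (a x c : ℤ) :
    charge ((· + c) '' B) t (a + c) (x + c) = charge B t a x := by
  have hinj : Function.Injective (· + c : ℤ → ℤ) := add_left_injective c
  rw [charge, charge, beads, gaps, ← image_add_runner, ← Set.image_add_const_Ici,
    ← Set.image_add_const_Iio, ← Set.image_inter hinj, ← Set.image_inter hinj,
    ← Set.image_compl_eq ⟨hinj, fun y => ⟨y - c, sub_add_cancel y c⟩⟩,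
    ← Set.image_inter hinj, ← Set.image_inter hinj, Set.ncard_image_of_injective _ hinj,
    Set.ncard_image_of_injective _ hinj, beads, gaps]

lemma coreBeta_image_add (t : ℕ) (B : Set ℤ) (c : ℤ) :
    coreBeta t ((· + c) '' B) = (· + c) '' coreBeta t B := by
  ext y
  obtain ⟨x, rfl⟩ : ∃ x, y = x + c := ⟨y - c, by ring⟩
  rw [(add_left_injective c).mem_set_image, mem_coreBeta, mem_coreBeta, charge_image_add]

lemma coreBeta_coreBeta_mul {B : Set ℤ} (hB : IsBetaSet B) (r s : ℕ) :
    coreBeta s (coreBeta (r * s) B) = coreBeta s B := by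
  rcases Nat.eq_zero_or_pos (r * s) with h | h
  · rw [h, coreBeta_zero hB.1]
  obtain ⟨hr, hs⟩ := CanonicallyOrderedAdd.mul_pos.1 h
  ext x
  rw [mem_coreBeta, mem_coreBeta, charge_eq_sum (isBetaSet_coreBeta hB _) hr hs,
    charge_eq_sum hB hr hs]
  simp only [charge_coreBeta hB h]

lemma core_ofBeta {B : Set ℤ} (hB : IsBetaSet B) (t : ℕ) :
    core t (ofBeta B) = ofBeta (coreBeta t B) := by
  obtain ⟨r, hr⟩ := beta_ofBeta hB
  have h0 : beta 0 (ofBeta B) = (· + -r) '' B := by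
    rw [← add_neg_cancel r, beta_add, hr]
  rw [core, h0, coreBeta_image_add, ofBeta_image_add (isBetaSet_coreBeta hB t)]

lemma core_core_mul_eq (r s : ℕ) (l : BetaPartition) : core s (core (r * s) l) = core s l := by
  have hB := isBetaSet_beta 0 l
  calc core s (core (r * s) l) = ofBeta (coreBeta s (coreBeta (r * s) (beta 0 l))) :=
        core_ofBeta (isBetaSet_coreBeta hB _) s
    _ = core s l := by rw [coreBeta_coreBeta_mul hB]; rfl

lemma IsCore.mul_left {s : ℕ} {l : BetaPartition} (h : IsCore s l) (r : ℕ) :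
    IsCore (r * s) l := by
  have hB := isBetaSet_beta 0 l
  obtain ⟨c, hc⟩ := beta_ofBeta (isBetaSet_coreBeta hB s)
  rw [show ofBeta (coreBeta s (beta 0 l)) = l from h] at hc
  have hclosed : DownClosedMod s (beta 0 l) := by
    have := (downClosedMod_coreBeta hB s).image_add (-c)
    rwa [← hc, ← beta_add, add_neg_cancel] at this
  show ofBeta (coreBeta (r * s) (beta 0 l)) = l
  rw [coreBeta_eq_self hB.1 (hclosed.mul_left r), ofBeta_beta]

end BetaPartition

open BetaPartition in
theorem core_core_mul_general (r s : ℕ) (l : BetaPartition) :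
    core s l = core s (core (r * s) l) ∧ (IsCore s l → IsCore (r * s) l) :=
  ⟨(core_core_mul_eq r s l).symm, fun h => h.mul_left r⟩

open BetaPartition in
/-- The `s`-core of `λ` equals the `s`-core of the `rs`-core of `λ`; in particular
every `s`-core is an `rs`-core. -/
theorem core_core_mul (r s : ℕ) (hr : 0 < r) (hs : 0 < s) (l : BetaPartition) :
    core s l = core s (core (r * s) l) ∧ (IsCore s l → IsCore (r * s) l) :=
  core_core_mul_general r s l
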